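/- arXiv:2009.03860 — 2 statements merged into one kernel-verified Lean document; each statement's English description precedes it below -/
import Mathlib

section
/- Let U be a random vector in R^d with E[U] = 0, and let u_α satisfy P(‖U‖² < u_α) = 1 − α. Then for any event Ω with P(Ω) ≥ 1 − α and E[U | Ω] = 0, the trace of the conditional covariance matrix satisfies Trace(Cov(U | ‖U‖² < u_α)) ≤ Trace(Cov(U | Ω)). -/
/-!
This is the bathtub principle. Put `g = ‖U‖² - uα`. Then `g < 0` exactly on the
truncation event `A`, so `A` minimizes `∫_t g` over all events `t`, and that minimum is
nonpositive. As `P(A) ≤ P(s)`, dividing by the probabilities gives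
`E[g | A] = ∫_A g / P(A) ≤ ∫_A g / P(s) ≤ ∫_s g / P(s) = E[g | s]`.
-/

open MeasureTheory ProbabilityTheory Set

lemma indicator_sublevel_sub_le_indicator {α : Type*} (f : α → ℝ) (u : ℝ) (t : Set α) :
    {x | f x < u}.indicator (fun x => f x - u) ≤ t.indicator (fun x => f x - u) := by
  intro x
  by_cases hx : f x < u <;> by_cases ht : x ∈ t <;>
    simp only [indicator_of_mem, indicator_of_notMem, mem_ofPred_eq, hx, ht, not_false_eq_true,
      le_refl] <;> linarith

section Bathtub

variable {Ω : Type*} [MeasurableSpace Ω] {μ : Measure Ω} {f : Ω → ℝ}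

lemma setIntegral_sublevel_sub_le [IsFiniteMeasure μ] (hf : Integrable f μ) (u : ℝ)
    (t : Set Ω) :
    ∫ x in {x | f x < u}, (f x - u) ∂μ ≤ ∫ x in t, (f x - u) ∂μ := by
  have hg : Integrable (fun x => f x - u) μ := hf.sub (integrable_const u)
  rw [← Measure.restrict_toMeasurable (measure_ne_top μ t),
    ← integral_indicator₀ (nullMeasurableSet_lt hf.aemeasurable aemeasurable_const),
    ← integral_indicator (measurableSet_toMeasurable μ t)]
  exact integral_mono (hg.indicator₀ (nullMeasurableSet_lt hf.aemeasurable aemeasurable_const))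
    (hg.indicator (measurableSet_toMeasurable μ t)) (indicator_sublevel_sub_le_indicator f u _)

lemma integral_cond_eq_inv_mul_setIntegral (g : Ω → ℝ) (s : Set Ω) :
    ∫ x, g x ∂μ[|s] = (μ.real s)⁻¹ * ∫ x in s, g x ∂μ := by
  rw [ProbabilityTheory.cond, integral_smul_measure, ENNReal.toReal_inv, measureReal_def,
    smul_eq_mul]

lemma integral_cond_sub_const [IsFiniteMeasure μ] (hf : Integrable f μ) (u : ℝ) {s : Set Ω}
    (hs : μ s ≠ 0) :
    ∫ x, f x ∂μ[|s] - u = (μ.real s)⁻¹ * ∫ x in s, (f x - u) ∂μ := by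
  have := cond_isProbabilityMeasure_of_finite hs (measure_ne_top μ s)
  rw [← integral_cond_eq_inv_mul_setIntegral, integral_sub _ (integrable_const u),
    integral_const, probReal_univ, one_smul]
  exact hf.restrict.smul_measure (ENNReal.inv_ne_top.2 hs)

theorem integral_cond_sublevel_le [IsFiniteMeasure μ] (hf : Integrable f μ) {u : ℝ}
    {s : Set Ω} (hA : μ {x | f x < u} ≠ 0) (hAs : μ {x | f x < u} ≤ μ s) :
    ∫ x, f x ∂μ[|{x | f x < u}] ≤ ∫ x, f x ∂μ[|s] := by
  set A := {x | f x < u}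
  have hs : μ s ≠ 0 := (pos_iff_ne_zero.2 hA |>.trans_le hAs).ne'
  have hA_pos : 0 < μ.real A := ENNReal.toReal_pos hA (measure_ne_top μ A)
  have hA_le : μ.real A ≤ μ.real s := ENNReal.toReal_mono (measure_ne_top μ s) hAs
  have hbathtub (t : Set Ω) := setIntegral_sublevel_sub_le hf u t
  have hA_nonpos : ∫ x in A, (f x - u) ∂μ ≤ 0 := by
    simpa using hbathtub ∅
  suffices ∫ x, f x ∂μ[|A] - u ≤ ∫ x, f x ∂μ[|s] - u by linarith
  rw [integral_cond_sub_const hf u hA, integral_cond_sub_const hf u hs]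
  calc (μ.real A)⁻¹ * ∫ x in A, (f x - u) ∂μ
      ≤ (μ.real s)⁻¹ * ∫ x in A, (f x - u) ∂μ :=
        mul_le_mul_of_nonpos_right (inv_anti₀ hA_pos hA_le) hA_nonpos
    _ ≤ (μ.real s)⁻¹ * ∫ x in s, (f x - u) ∂μ :=
        mul_le_mul_of_nonneg_left (hbathtub s) (inv_nonneg.2 measureReal_nonneg)

end Bathtub

theorem stmt_1_general
    {Ω : Type*} [MeasurableSpace Ω] (μ : Measure Ω) [IsProbabilityMeasure μ]
    (d : ℕ)
    (U : Ω → EuclideanSpace ℝ (Fin d))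
    (hU2int : Integrable (fun ω => ‖U ω‖ ^ 2) μ)
    (α : ℝ) (hα : α ∈ Set.Ioo (0 : ℝ) 1)
    (uα : ℝ) (hquant : μ {ω | ‖U ω‖ ^ 2 < uα} = ENNReal.ofReal (1 - α))
    (s : Set Ω)
    (hsprob : ENNReal.ofReal (1 - α) ≤ μ s) :
    ∫ ω, ‖U ω‖ ^ 2 ∂(μ[|{ω | ‖U ω‖ ^ 2 < uα}]) ≤ ∫ ω, ‖U ω‖ ^ 2 ∂(μ[|s]) := by
  have hA : μ {ω | ‖U ω‖ ^ 2 < uα} ≠ 0 := by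
    rw [hquant]
    exact (ENNReal.ofReal_pos.2 (sub_pos.2 hα.2)).ne'
  exact integral_cond_sublevel_le hU2int hA (hquant ▸ hsprob)

/-- For a mean-zero square-integrable random vector `U` in `ℝᵈ`, among
events of probability at least `1 - α` on which the conditional mean of `U` is zero,
the norm-ball truncation event `{‖U‖² < uα}` (of probability exactly `1 - α`)
minimizes the trace of the conditional covariance matrix; since the conditional mean
is zero on the events considered, `Trace(Cov(U | Ω)) = E[‖U‖² | Ω]`. -/
theorem stmt_1
    {Ω : Type*} [MeasurableSpace Ω] (μ : Measure Ω) [IsProbabilityMeasure μ]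
    (d : ℕ)
    (U : Ω → EuclideanSpace ℝ (Fin d)) (hU : Measurable U)
    (hUint : Integrable U μ)
    (hU2int : Integrable (fun ω => ‖U ω‖ ^ 2) μ)
    (hmean : ∫ ω, U ω ∂μ = 0)
    (α : ℝ) (hα : α ∈ Set.Ioo (0 : ℝ) 1)
    (uα : ℝ) (hquant : μ {ω | ‖U ω‖ ^ 2 < uα} = ENNReal.ofReal (1 - α))
    (s : Set Ω) (hs : MeasurableSet s)
    (hsprob : ENNReal.ofReal (1 - α) ≤ μ s)
    (hscond : ∫ ω, U ω ∂(μ[|s]) = 0) :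
    ∫ ω, ‖U ω‖ ^ 2 ∂(μ[|{ω | ‖U ω‖ ^ 2 < uα}]) ≤ ∫ ω, ‖U ω‖ ^ 2 ∂(μ[|s]) :=
  stmt_1_general μ d U hU2int α hα uα hquant s hsprob
end

section
/- Optimality of tail truncation in d=1: under the setting of the 1-dimensional conditional variance decomposition, let V = (2/n)Σ_i w_i x_i Z_i and B = V/√Var(V). For the rejection threshold α let φ_T^α be the acceptance event {B² < a} with P(B² < a) = 1 − α. Then for any symmetric acceptance rule ρ with P(ρ=1 | x) ≥ 1 − α, Var(τ̂ | x, φ_T^α = 1) ≤ Var(τ̂ | x, ρ = 1). -/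
/-!
Given the assignment `z`, the estimator is `τ̂ = K + β̄ V(z) + N_z` with `β̄ = (β₁ + β₀)/2`,
where the noise `N_z` is centred with second moment `σ² Σᵢ (2wᵢ/n)²` for every `z`. Hence, for
an acceptance set `T`, `Var(τ̂ | T) = β̄² · avg_T (V - avg_T V)² + σ² Σᵢ (2wᵢ/n)²`. If `T` is
closed under `z ↦ ¬z` (which preserves balance because `n` is even) then `avg_T V = 0`, since `V`
changes sign. The target-balance set keeps exactly the assignments of smallest `V²`, so any set
at least as large has at least as large an average of `V²`.
-/

open MeasureTheory ProbabilityTheory Finset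

section Pi

variable {ι : Type*} [Fintype ι] {Ω : ι → Type*} [∀ i, MeasurableSpace (Ω i)]
  {μ : ∀ i, Measure (Ω i)} [∀ i, IsProbabilityMeasure (μ i)] {g : ∀ i, Ω i → ℝ}

lemma memLp_sum_comp_eval (hg : ∀ i, MemLp (g i) 2 (μ i)) :
    MemLp (fun x ↦ ∑ i, g i (x i)) 2 (Measure.pi μ) :=
  memLp_finsetSum _ fun i _ ↦ (hg i).comp_measurePreserving (measurePreserving_eval μ i)

lemma integral_sum_comp_eval (hg : ∀ i, Integrable (g i) (μ i)) :
    ∫ x, ∑ i, g i (x i) ∂Measure.pi μ = ∑ i, ∫ y, g i y ∂μ i := by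
  rw [integral_finsetSum (f := fun i (x : ∀ i, Ω i) ↦ g i (x i)) _ fun i _ ↦
    ((measurePreserving_eval μ i).integrable_comp (hg i).aestronglyMeasurable).2 (hg i)]
  exact sum_congr rfl fun i _ ↦ integral_comp_eval (hg i).aestronglyMeasurable

lemma integral_sum_comp_eval_sq (hg : ∀ i, MemLp (g i) 2 (μ i))
    (hmean : ∀ i, ∫ y, g i y ∂μ i = 0) :
    ∫ x, (∑ i, g i (x i)) ^ 2 ∂Measure.pi μ = ∑ i, ∫ y, g i y ^ 2 ∂μ i := by
  have hX : ∀ i, MemLp (fun x : ∀ i, Ω i ↦ g i (x i)) 2 (Measure.pi μ) := fun i ↦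
    (hg i).comp_measurePreserving (measurePreserving_eval μ i)
  have hindep : iIndepFun (fun i (x : ∀ i, Ω i) ↦ g i (x i)) (Measure.pi μ) :=
    iIndepFun_pi fun i ↦ (hg i).aestronglyMeasurable.aemeasurable
  have hvar := IndepFun.variance_sum (s := univ) (fun i _ ↦ hX i)
    fun i _ j _ hij ↦ hindep.indepFun hij
  have hsum : (∑ i, fun x : ∀ i, Ω i ↦ g i (x i)) = fun x ↦ ∑ i, g i (x i) := by
    ext x; simp
  rw [hsum, variance_of_integral_eq_zero (memLp_sum_comp_eval hg).aemeasurable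
    (by simp [integral_sum_comp_eval fun i ↦ (hg i).integrable one_le_two, hmean])] at hvar
  rw [hvar]
  refine sum_congr rfl fun i _ ↦ ?_
  rw [(measurePreserving_eval μ i).variance_fun_comp (hg i).aestronglyMeasurable.aemeasurable,
    variance_of_integral_eq_zero (hg i).aestronglyMeasurable.aemeasurable (hmean i)]

end Pi

lemma integral_const_add_sq {Ω : Type*} [MeasurableSpace Ω] {μ : Measure Ω}
    [IsProbabilityMeasure μ] {N : Ω → ℝ} (hN : MemLp N 2 μ) (hmean : ∫ ω, N ω ∂μ = 0) (c : ℝ) :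
    ∫ ω, (c + N ω) ^ 2 ∂μ = c ^ 2 + ∫ ω, N ω ^ 2 ∂μ := by
  have hint := hN.integrable one_le_two
  have hlin : Integrable (fun ω ↦ c ^ 2 + 2 * c * N ω) μ :=
    (integrable_const _).add (hint.const_mul _)
  simp_rw [add_sq]
  rw [integral_add hlin hN.integrable_sq, integral_add (integrable_const _) (hint.const_mul _),
    integral_const_mul, hmean]
  simp

lemma sum_eq_zero_of_comp_eq_neg {β M : Type*} [AddCommGroup M] [IsAddTorsionFree M]
    {s : Finset β} {f : β → M} (φ : β → β)
    (hφ : ∀ z, φ (φ z) = z) (hs : ∀ z ∈ s, φ z ∈ s) (hf : ∀ z, f (φ z) = -f z) :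
    ∑ z ∈ s, f z = 0 :=
  sum_involution (fun z _ ↦ φ z) (fun z _ ↦ by rw [hf, add_neg_cancel])
    (fun z _ hz h ↦ hz (self_eq_neg.1 (by simpa [h] using hf z))) hs (fun z _ ↦ hφ z)

lemma integral_sum_sq_sub_integral_div_card {β Ω : Type*} [MeasurableSpace Ω] {μ : Measure Ω}
    [IsProbabilityMeasure μ] {T : Finset β} (hT : T.Nonempty) (u : β → ℝ) {N : β → Ω → ℝ}
    (hN : ∀ z ∈ T, MemLp (N z) 2 μ) (hmean : ∀ z ∈ T, ∫ ω, N z ω ∂μ = 0) {s : ℝ}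
    (hs : ∀ z ∈ T, ∫ ω, N z ω ^ 2 ∂μ = s) :
    ∫ ω, (∑ z ∈ T, (u z + N z ω - ∫ ω', (∑ z' ∈ T, (u z' + N z' ω')) / #T ∂μ) ^ 2) / #T ∂μ
      = (∑ z ∈ T, (u z - (∑ z' ∈ T, u z') / #T) ^ 2) / #T + s := by
  have hcard : (#T : ℝ) ≠ 0 := by exact_mod_cast hT.card_pos.ne'
  have hint : ∀ z ∈ T, Integrable (fun ω ↦ u z + N z ω) μ := fun z hz ↦
    (integrable_const _).add ((hN z hz).integrable one_le_two)
  have hmean_total : ∫ ω, (∑ z ∈ T, (u z + N z ω)) / #T ∂μ = (∑ z ∈ T, u z) / #T := by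
    rw [integral_div, integral_finsetSum _ hint]
    congr 1
    refine sum_congr rfl fun z hz ↦ ?_
    rw [integral_add (integrable_const _) ((hN z hz).integrable one_le_two), hmean z hz]
    simp
  rw [hmean_total]
  set ū := (∑ z ∈ T, u z) / #T
  have hsq : ∀ z ∈ T, Integrable (fun ω ↦ (u z - ū + N z ω) ^ 2) μ := by
    intro z hz
    have h : MemLp (fun ω ↦ u z - ū + N z ω) 2 μ := (memLp_const (u z - ū)).add (hN z hz)
    exact h.integrable_sq
  have hreg : ∀ ω, ∑ z ∈ T, (u z + N z ω - ū) ^ 2 = ∑ z ∈ T, (u z - ū + N z ω) ^ 2 :=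
    fun ω ↦ sum_congr rfl fun z _ ↦ by ring
  simp only [hreg]
  rw [integral_div, integral_finsetSum _ hsq,
    sum_congr rfl fun z hz ↦ integral_const_add_sq (hN z hz) (hmean z hz) _,
    sum_add_distrib, sum_congr rfl hs, sum_const, nsmul_eq_mul, add_div,
    mul_div_cancel_left₀ _ hcard]

lemma integral_sum_sq_sub_integral_div_card_of_sum_eq_zero {β Ω : Type*} [MeasurableSpace Ω]
    {μ : Measure Ω} [IsProbabilityMeasure μ] {T : Finset β} (hT : T.Nonempty) (K b : ℝ)
    {v : β → ℝ} (hv : ∑ z ∈ T, v z = 0) {N : β → Ω → ℝ}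
    (hN : ∀ z ∈ T, MemLp (N z) 2 μ) (hmean : ∀ z ∈ T, ∫ ω, N z ω ∂μ = 0) {s : ℝ}
    (hs : ∀ z ∈ T, ∫ ω, N z ω ^ 2 ∂μ = s) :
    ∫ ω, (∑ z ∈ T, (K + b * v z + N z ω
        - ∫ ω', (∑ z' ∈ T, (K + b * v z' + N z' ω')) / #T ∂μ) ^ 2) / #T ∂μ
      = b ^ 2 * ((∑ z ∈ T, v z ^ 2) / #T) + s := by
  have hcard : (#T : ℝ) ≠ 0 := by exact_mod_cast hT.card_pos.ne'
  refine (integral_sum_sq_sub_integral_div_card hT (fun z ↦ K + b * v z) hN hmean hs).trans ?_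
  have hmean_u : (∑ z ∈ T, (K + b * v z)) / #T = K := by
    rw [sum_add_distrib, ← mul_sum, hv, sum_const, nsmul_eq_mul]
    field_simp
    ring
  simp only [hmean_u, add_sub_cancel_left, mul_pow, ← mul_sum, mul_div_assoc]

lemma sum_div_card_le_sum_div_card {ι : Type*} [DecidableEq ι] {A T : Finset ι} {f : ι → ℝ}
    (hA : A.Nonempty) (hcard : #A ≤ #T) (hle : ∀ z ∈ A, ∀ z' ∈ T \ A, f z ≤ f z') :
    (∑ z ∈ A, f z) / #A ≤ (∑ z ∈ T, f z) / #T := by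
  obtain ⟨z₀, hz₀, hmax⟩ := A.exists_max_image f hA
  set t := f z₀
  -- `t` separates `A` from `T \ A`, so after shifting by `t` only `A ∩ T` is shared.
  have hshift : ∑ z ∈ A, (f z - t) ≤ ∑ z ∈ T, (f z - t) := by
    rw [← sum_inter_add_sum_sdiff A T, ← sum_inter_add_sum_sdiff T A, inter_comm T A]
    have hAT : ∑ z ∈ A \ T, (f z - t) ≤ 0 :=
      sum_nonpos fun z hz ↦ sub_nonpos.2 (hmax z (mem_sdiff.1 hz).1)
    have hTA : 0 ≤ ∑ z ∈ T \ A, (f z - t) :=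
      sum_nonneg fun z hz ↦ sub_nonneg.2 (hle z₀ hz₀ z hz)
    linarith
  have hsumA : ∑ z ∈ A, f z ≤ #A * t := by
    simpa using sum_le_card_nsmul A f t hmax
  simp only [sum_sub_distrib, sum_const, nsmul_eq_mul] at hshift
  have hApos : (0 : ℝ) < #A := by exact_mod_cast hA.card_pos
  have hcard' : (#A : ℝ) ≤ #T := by exact_mod_cast hcard
  rw [div_le_div_iff₀ hApos (hApos.trans_le hcard')]
  nlinarith [mul_nonneg (sub_nonneg.2 hcard') (sub_nonneg.2 hsumA)]

lemma sq_le_sq_of_div_sq_lt {u v c : ℝ} (h : (u / c) ^ 2 < (v / c) ^ 2) : u ^ 2 ≤ v ^ 2 := by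
  rw [div_pow, div_pow] at h
  rcases (sq_nonneg c).eq_or_lt with hc | hc
  · simp [← hc] at h
  · exact ((div_lt_div_iff_of_pos_right hc).1 h).le

lemma card_filter_not_eq_half {n : ℕ} (heven : Even n) {z : Fin n → Bool}
    (hz : (univ.filter fun i ↦ z i).card = n / 2) :
    (univ.filter fun i ↦ (!z i) = true).card = n / 2 := by
  have hcompl : (univ.filter fun i ↦ (!z i) = true) = (univ.filter fun i ↦ z i)ᶜ := by
    ext i; simp
  rw [hcompl, card_compl, hz, Fintype.card_fin]
  obtain ⟨m, rfl⟩ := heven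
  omega

lemma sum_mul_sign_not {ι : Type*} [Fintype ι] (c : ι → ℝ) (z : ι → Bool) :
    ∑ i, c i * (if (!z i) = true then 1 else -1) = -∑ i, c i * (if z i then 1 else -1) := by
  rw [← sum_neg_distrib]
  refine sum_congr rfl fun i _ ↦ ?_
  cases z i <;> simp

-- With `p = (ε₀, ε₁)`: the noise that a treated (`b = true`) or control unit contributes to `τ̂`.
def armNoise (b : Bool) (p : ℝ × ℝ) : ℝ := if b then p.2 else -p.1

def noiseTerm {ι : Type*} [Fintype ι] (a : ι → ℝ) (z : ι → Bool) (e : ι → ℝ × ℝ) : ℝ :=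
  ∑ i, a i * armNoise (z i) (e i)

lemma estimator_eq_add_noiseTerm {ι : Type*} [Fintype ι] (c β1 β0 : ℝ) (w x : ι → ℝ)
    (z : ι → Bool) (e : ι → ℝ × ℝ) :
    c * ∑ i, (if z i then w i * (β1 * x i + (e i).2) else -(w i * (β0 * x i + (e i).1)))
      = c * ∑ i, (β1 - β0) / 2 * (w i * x i)
        + (β1 + β0) / 2 * (c * ∑ i, w i * x i * (if z i then 1 else -1))
        + noiseTerm (fun i ↦ c * w i) z e := by
  simp only [noiseTerm, armNoise, mul_sum, ← sum_add_distrib]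
  refine sum_congr rfl fun i _ ↦ ?_
  split_ifs <;> ring

section Noise

variable {μ0 : Measure (ℝ × ℝ)} {σ : ℝ}

lemma memLp_armNoise (hi1 : Integrable (fun p : ℝ × ℝ ↦ p.1 ^ 2) μ0)
    (hi2 : Integrable (fun p : ℝ × ℝ ↦ p.2 ^ 2) μ0) (b : Bool) : MemLp (armNoise b) 2 μ0 := by
  have hmeas : AEStronglyMeasurable (armNoise b) μ0 := by
    cases b
    · exact measurable_fst.neg.aestronglyMeasurable
    · exact measurable_snd.aestronglyMeasurable
  rw [memLp_two_iff_integrable_sq hmeas]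
  cases b <;> simpa [armNoise]

lemma integral_armNoise (hmean1 : ∫ p, (p : ℝ × ℝ).1 ∂μ0 = 0)
    (hmean2 : ∫ p, (p : ℝ × ℝ).2 ∂μ0 = 0) (b : Bool) : ∫ p, armNoise b p ∂μ0 = 0 := by
  cases b <;> simp [armNoise, integral_neg, hmean1, hmean2]

lemma integral_armNoise_sq (hvar1 : ∫ p, (p : ℝ × ℝ).1 ^ 2 ∂μ0 = σ ^ 2)
    (hvar2 : ∫ p, (p : ℝ × ℝ).2 ^ 2 ∂μ0 = σ ^ 2) (b : Bool) :
    ∫ p, armNoise b p ^ 2 ∂μ0 = σ ^ 2 := by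
  cases b <;> simp [armNoise, hvar1, hvar2]

variable [IsProbabilityMeasure μ0] {ι : Type*} [Fintype ι] (a : ι → ℝ) (z : ι → Bool)

lemma memLp_noiseTerm (hi1 : Integrable (fun p : ℝ × ℝ ↦ p.1 ^ 2) μ0)
    (hi2 : Integrable (fun p : ℝ × ℝ ↦ p.2 ^ 2) μ0) :
    MemLp (noiseTerm a z) 2 (Measure.pi fun _ ↦ μ0) :=
  memLp_sum_comp_eval (g := fun i p ↦ a i * armNoise (z i) p) fun i ↦
    (memLp_armNoise hi1 hi2 (z i)).const_mul (a i)

lemma integral_noiseTerm (hi1 : Integrable (fun p : ℝ × ℝ ↦ p.1 ^ 2) μ0)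
    (hi2 : Integrable (fun p : ℝ × ℝ ↦ p.2 ^ 2) μ0)
    (hmean1 : ∫ p, (p : ℝ × ℝ).1 ∂μ0 = 0) (hmean2 : ∫ p, (p : ℝ × ℝ).2 ∂μ0 = 0) :
    ∫ e, noiseTerm a z e ∂(Measure.pi fun _ ↦ μ0) = 0 := by
  unfold noiseTerm
  rw [integral_sum_comp_eval (g := fun i p ↦ a i * armNoise (z i) p) fun i ↦
    ((memLp_armNoise hi1 hi2 (z i)).integrable one_le_two).const_mul (a i)]
  simp [integral_const_mul, integral_armNoise hmean1 hmean2]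

lemma integral_noiseTerm_sq (hi1 : Integrable (fun p : ℝ × ℝ ↦ p.1 ^ 2) μ0)
    (hi2 : Integrable (fun p : ℝ × ℝ ↦ p.2 ^ 2) μ0)
    (hmean1 : ∫ p, (p : ℝ × ℝ).1 ∂μ0 = 0) (hmean2 : ∫ p, (p : ℝ × ℝ).2 ∂μ0 = 0)
    (hvar1 : ∫ p, (p : ℝ × ℝ).1 ^ 2 ∂μ0 = σ ^ 2) (hvar2 : ∫ p, (p : ℝ × ℝ).2 ^ 2 ∂μ0 = σ ^ 2) :
    ∫ e, noiseTerm a z e ^ 2 ∂(Measure.pi fun _ ↦ μ0) = σ ^ 2 * ∑ i, a i ^ 2 := by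
  unfold noiseTerm
  rw [integral_sum_comp_eval_sq (g := fun i p ↦ a i * armNoise (z i) p)
    (fun i ↦ (memLp_armNoise hi1 hi2 (z i)).const_mul (a i))
    (fun i ↦ by simp [integral_const_mul, integral_armNoise hmean1 hmean2]), mul_sum]
  refine sum_congr rfl fun i _ ↦ ?_
  simp_rw [mul_pow]
  rw [integral_const_mul, integral_armNoise_sq hvar1 hvar2, mul_comm]

end Noise

theorem stmt_17_general (n : ℕ) (heven : Even n)
    (x w : Fin n → ℝ) (β1 β0 σ : ℝ) (α a : ℝ)
    -- per-unit noise distribution for (ε₀, ε₁): mean zero, variance σ², independent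
    (μ0 : Measure (ℝ × ℝ)) [IsProbabilityMeasure μ0]
    (hi3 : Integrable (fun p : ℝ × ℝ => p.1 ^ 2) μ0)
    (hi4 : Integrable (fun p : ℝ × ℝ => p.2 ^ 2) μ0)
    (hmean0 : (∫ p, (p : ℝ × ℝ).1 ∂μ0) = 0) (hmean1 : (∫ p, (p : ℝ × ℝ).2 ∂μ0) = 0)
    (hvar0 : (∫ p, (p : ℝ × ℝ).1 ^ 2 ∂μ0) = σ ^ 2)
    (hvar1 : (∫ p, (p : ℝ × ℝ).2 ^ 2 ∂μ0) = σ ^ 2)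
    (μE : Measure (Fin n → ℝ × ℝ)) (hμE : μE = Measure.pi fun _ : Fin n => μ0)
    -- balanced sign vectors and signs
    (S : Finset (Fin n → Bool))
    (hS : S = Finset.univ.filter fun z : Fin n → Bool =>
      (Finset.univ.filter fun i => z i).card = n / 2)
    (sgn : (Fin n → Bool) → Fin n → ℝ)
    (hsgn : ∀ z i, sgn z i = if z i then 1 else -1)
    -- V, its variance under uniform balanced assignment, and the standardized B
    (V : (Fin n → Bool) → ℝ)
    (hV : ∀ z, V z = (2 / (n : ℝ)) * ∑ i, w i * x i * sgn z i)
    (VarV : ℝ)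
    (B : (Fin n → Bool) → ℝ) (hB : ∀ z, B z = V z / Real.sqrt VarV)
    -- Target Balance acceptance: B² < a, of probability exactly 1 - α
    (Ta : Finset (Fin n → Bool))
    (hTa : ∀ z, z ∈ Ta ↔ z ∈ S ∧ (B z) ^ 2 < a)
    (hTafrac : (Ta.card : ℝ) / S.card = 1 - α)
    (hTane : Ta.Nonempty)
    -- competing symmetric acceptance rule of probability at least 1 - α
    (ρ : (Fin n → Bool) → Bool)
    (hsym : ∀ z, ρ z = ρ (fun i => !(z i)))
    (Tρ : Finset (Fin n → Bool))
    (hTρ : Tρ = S.filter fun z => ρ z = true)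
    (hTρfrac : (1 : ℝ) - α ≤ (Tρ.card : ℝ) / S.card)
    (hTρne : Tρ.Nonempty)
    -- the importance-weighted estimator with linear outcomes and noise
    (τ : (Fin n → ℝ × ℝ) → (Fin n → Bool) → ℝ)
    (hτ : ∀ e z, τ e z = (2 / (n : ℝ)) *
      ∑ i, (if z i then w i * (β1 * x i + (e i).2)
                   else -(w i * (β0 * x i + (e i).1))))
    -- conditional variance over noise and accepted assignment
    (VarC : Finset (Fin n → Bool) → ℝ)
    (hVarC : ∀ T' : Finset (Fin n → Bool), VarC T' =
      ∫ e, (∑ z ∈ T',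
        (τ e z - ∫ e', (∑ z' ∈ T', τ e' z') / T'.card ∂μE) ^ 2) / T'.card ∂μE) :
    VarC Ta ≤ VarC Tρ := by
  subst hμE
  have hτ_eq : ∀ e z, τ e z = (2 / (n : ℝ)) * ∑ i, (β1 - β0) / 2 * (w i * x i)
      + (β1 + β0) / 2 * V z + noiseTerm (fun i ↦ 2 / (n : ℝ) * w i) z e := by
    intro e z
    rw [hτ, estimator_eq_add_noiseTerm, hV]
    simp only [hsgn]
  have hV_neg : ∀ z, V (fun i ↦ !z i) = -V z := fun z ↦ by
    simp only [hV, hsgn, sum_mul_sign_not, mul_neg]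
  have hS_neg : ∀ z ∈ S, (fun i ↦ !z i) ∈ S := by
    intro z hz
    simp only [hS, mem_filter, mem_univ, true_and] at hz ⊢
    exact card_filter_not_eq_half heven hz
  have hTa_neg : ∀ z ∈ Ta, (fun i ↦ !z i) ∈ Ta := by
    intro z hz
    obtain ⟨hzS, hzB⟩ := (hTa z).1 hz
    refine (hTa _).2 ⟨hS_neg z hzS, ?_⟩
    rwa [hB, hV_neg, neg_div, neg_sq, ← hB]
  have hTρ_neg : ∀ z ∈ Tρ, (fun i ↦ !z i) ∈ Tρ := by
    intro z hz
    rw [hTρ, mem_filter] at hz ⊢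
    exact ⟨hS_neg z hz.1, hsym z ▸ hz.2⟩
  have hVarC_eq : ∀ T : Finset (Fin n → Bool), T.Nonempty → (∀ z ∈ T, (fun i ↦ !z i) ∈ T) →
      VarC T = ((β1 + β0) / 2) ^ 2 * ((∑ z ∈ T, V z ^ 2) / #T)
        + σ ^ 2 * ∑ i, (2 / (n : ℝ) * w i) ^ 2 := by
    intro T hT hT_neg
    rw [hVarC, show τ = _ from funext₂ hτ_eq]
    exact integral_sum_sq_sub_integral_div_card_of_sum_eq_zero hT _ _
      (sum_eq_zero_of_comp_eq_neg _ (fun z ↦ by simp) hT_neg hV_neg)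
      (fun z _ ↦ memLp_noiseTerm _ z hi3 hi4)
      (fun z _ ↦ integral_noiseTerm _ z hi3 hi4 hmean0 hmean1)
      (fun z _ ↦ integral_noiseTerm_sq _ z hi3 hi4 hmean0 hmean1 hvar0 hvar1)
  have hcard : #Ta ≤ #Tρ := by
    have hS_pos : (0 : ℝ) < #S := by
      exact_mod_cast (hTane.mono fun z hz ↦ ((hTa z).1 hz).1).card_pos
    exact_mod_cast (div_le_div_iff_of_pos_right hS_pos).1 (hTafrac.trans_le hTρfrac)
  have hsep : ∀ z ∈ Ta, ∀ z' ∈ Tρ \ Ta, V z ^ 2 ≤ V z' ^ 2 := by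
    intro z hz z' hz'
    obtain ⟨hz'ρ, hz'a⟩ := mem_sdiff.1 hz'
    rw [hTρ, mem_filter] at hz'ρ
    have hB' : a ≤ B z' ^ 2 := not_lt.1 fun h ↦ hz'a ((hTa z').2 ⟨hz'ρ.1, h⟩)
    have hBz := ((hTa z).1 hz).2
    rw [hB] at hBz hB'
    exact sq_le_sq_of_div_sq_lt (hBz.trans_le hB')
  rw [hVarC_eq Ta hTane hTa_neg, hVarC_eq Tρ hTρne hTρ_neg]
  exact add_le_add_left
    (mul_le_mul_of_nonneg_left (sum_div_card_le_sum_div_card hTane hcard hsep) (sq_nonneg _)) _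

/-- Optimality of tail truncation in `d = 1`. With
`V = (2/n) Σᵢ wᵢxᵢZᵢ`, `B = V/√Var(V)`, and the Target Balance acceptance event
`{B² < a}` of probability exactly `1 - α` (under the uniform distribution on
balanced sign vectors), for any symmetric acceptance rule `ρ` with
`P(ρ=1) ≥ 1 - α`, `Var(τ̂ | x, B² < a) ≤ Var(τ̂ | x, ρ = 1)`. -/
theorem stmt_17 (n : ℕ) (hn : 0 < n) (heven : Even n)
    (x w : Fin n → ℝ) (β1 β0 σ : ℝ) (α a : ℝ) (hα : α ∈ Set.Ioo (0 : ℝ) 1)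
    -- per-unit noise distribution for (ε₀, ε₁): mean zero, variance σ², independent
    (μ0 : Measure (ℝ × ℝ)) [IsProbabilityMeasure μ0]
    (hi1 : Integrable (fun p : ℝ × ℝ => p.1) μ0)
    (hi2 : Integrable (fun p : ℝ × ℝ => p.2) μ0)
    (hi3 : Integrable (fun p : ℝ × ℝ => p.1 ^ 2) μ0)
    (hi4 : Integrable (fun p : ℝ × ℝ => p.2 ^ 2) μ0)
    (hmean0 : (∫ p, (p : ℝ × ℝ).1 ∂μ0) = 0) (hmean1 : (∫ p, (p : ℝ × ℝ).2 ∂μ0) = 0)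
    (hvar0 : (∫ p, (p : ℝ × ℝ).1 ^ 2 ∂μ0) = σ ^ 2)
    (hvar1 : (∫ p, (p : ℝ × ℝ).2 ^ 2 ∂μ0) = σ ^ 2)
    (hindep : IndepFun (fun p : ℝ × ℝ => p.1) (fun p : ℝ × ℝ => p.2) μ0)
    (μE : Measure (Fin n → ℝ × ℝ)) (hμE : μE = Measure.pi fun _ : Fin n => μ0)
    -- balanced sign vectors and signs
    (S : Finset (Fin n → Bool))
    (hS : S = Finset.univ.filter fun z : Fin n → Bool =>
      (Finset.univ.filter fun i => z i).card = n / 2)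
    (sgn : (Fin n → Bool) → Fin n → ℝ)
    (hsgn : ∀ z i, sgn z i = if z i then 1 else -1)
    -- V, its variance under uniform balanced assignment, and the standardized B
    (V : (Fin n → Bool) → ℝ)
    (hV : ∀ z, V z = (2 / (n : ℝ)) * ∑ i, w i * x i * sgn z i)
    (VarV : ℝ)
    (hVarV : VarV = (∑ z ∈ S, (V z - (∑ z' ∈ S, V z') / S.card) ^ 2) / S.card)
    (hVarVpos : 0 < VarV)
    (B : (Fin n → Bool) → ℝ) (hB : ∀ z, B z = V z / Real.sqrt VarV)
    -- Target Balance acceptance: B² < a, of probability exactly 1 - α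
    (Ta : Finset (Fin n → Bool))
    (hTa : ∀ z, z ∈ Ta ↔ z ∈ S ∧ (B z) ^ 2 < a)
    (hTafrac : (Ta.card : ℝ) / S.card = 1 - α)
    (hTane : Ta.Nonempty)
    -- competing symmetric acceptance rule of probability at least 1 - α
    (ρ : (Fin n → Bool) → Bool)
    (hsym : ∀ z, ρ z = ρ (fun i => !(z i)))
    (Tρ : Finset (Fin n → Bool))
    (hTρ : Tρ = S.filter fun z => ρ z = true)
    (hTρfrac : (1 : ℝ) - α ≤ (Tρ.card : ℝ) / S.card)
    (hTρne : Tρ.Nonempty)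
    -- the importance-weighted estimator with linear outcomes and noise
    (τ : (Fin n → ℝ × ℝ) → (Fin n → Bool) → ℝ)
    (hτ : ∀ e z, τ e z = (2 / (n : ℝ)) *
      ∑ i, (if z i then w i * (β1 * x i + (e i).2)
                   else -(w i * (β0 * x i + (e i).1))))
    -- conditional variance over noise and accepted assignment
    (VarC : Finset (Fin n → Bool) → ℝ)
    (hVarC : ∀ T' : Finset (Fin n → Bool), VarC T' =
      ∫ e, (∑ z ∈ T',
        (τ e z - ∫ e', (∑ z' ∈ T', τ e' z') / T'.card ∂μE) ^ 2) / T'.card ∂μE) :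
    VarC Ta ≤ VarC Tρ :=
  stmt_17_general n heven x w β1 β0 σ α a μ0 hi3 hi4 hmean0 hmean1 hvar0 hvar1 μE hμE S hS sgn hsgn
    V hV VarV B hB Ta hTa hTafrac hTane ρ hsym Tρ hTρ hTρfrac hTρne τ hτ VarC hVarC
end
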